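/- The Lévy-Prokhorov modality λ is subadditive: for f, g: X → [0,1] and any finitely supported probability distribution μ, λ(f ⊕ g)(μ) ≤ λ(f)(μ) ⊕ λ(g)(μ), where ⊕ denotes truncated addition (pointwise on functions). -/

import Mathlib

/-- Total mass of a finitely supported weight function on a set. -/
noncomputable def mass {X : Type*} (s : Finset X) (μ : X → ℝ) (A : Set X) : ℝ :=
  ∑ x ∈ s, Set.indicator A μ x

lemma mass_congr' {X : Type*} (s : Finset X) (μ : X → ℝ) {A B : Set X}
    (h : ∀ x ∈ s, x ∈ A ↔ x ∈ B) : mass s μ A = mass s μ B :=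
  Finset.sum_congr rfl fun x hx => by
    by_cases hA : x ∈ A
    · rw [Set.indicator_of_mem hA, Set.indicator_of_mem ((h x hx).mp hA)]
    · rw [Set.indicator_of_notMem hA,
        Set.indicator_of_notMem (fun hB => hA ((h x hx).mpr hB))]

lemma mass_nonneg' {X : Type*} (s : Finset X) (μ : X → ℝ) (hμ0 : ∀ x, 0 ≤ μ x)
    (A : Set X) : 0 ≤ mass s μ A :=
  Finset.sum_nonneg fun x _ => Set.indicator_nonneg (fun y _ => hμ0 y) x

lemma mass_le_sum' {X : Type*} (s : Finset X) (μ : X → ℝ) (hμ0 : ∀ x, 0 ≤ μ x)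
    (A : Set X) : mass s μ A ≤ ∑ x ∈ s, μ x :=
  Finset.sum_le_sum fun x _ => Set.indicator_le_self' (fun y _ => hμ0 y) x

lemma mass_union_le' {X : Type*} (s : Finset X) (μ : X → ℝ) (hμ0 : ∀ x, 0 ≤ μ x)
    (A B : Set X) : mass s μ (A ∪ B) ≤ mass s μ A + mass s μ B := by
  rw [mass, mass, mass, ← Finset.sum_add_distrib]
  refine Finset.sum_le_sum fun x _ => ?_
  by_cases hA : x ∈ A
  · by_cases hB : x ∈ B
    · simp [Set.indicator_of_mem, hA, hB, Set.mem_union, hμ0 x]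
    · simp [Set.indicator_of_mem, Set.indicator_of_notMem, hA, hB, Set.mem_union]
  · by_cases hB : x ∈ B
    · simp [Set.indicator_of_mem, Set.indicator_of_notMem, hA, hB, Set.mem_union]
    · simp [Set.indicator_of_notMem, hA, hB, Set.mem_union]

lemma mass_mono' {X : Type*} (s : Finset X) (μ : X → ℝ) (hμ0 : ∀ x, 0 ≤ μ x)
    {A B : Set X} (hAB : A ⊆ B) : mass s μ A ≤ mass s μ B :=
  Finset.sum_le_sum fun x _ => Set.indicator_le_indicator_of_subset hAB (fun y => hμ0 y) x

lemma sInf_mem_level {X : Type*} (μ : X → ℝ) (s : Finset X)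
    (hμ0 : ∀ x, 0 ≤ μ x) (hμ1 : ∑ x ∈ s, μ x = 1) (h : X → ℝ) :
    sInf {ε : ℝ | 0 ≤ ε ∧ mass s μ {x | h x > ε} ≤ ε} ∈
      {ε : ℝ | 0 ≤ ε ∧ mass s μ {x | h x > ε} ≤ ε} := by
  set S := {ε : ℝ | 0 ≤ ε ∧ mass s μ {x | h x > ε} ≤ ε} with hS
  have h1 : (1:ℝ) ∈ S := ⟨zero_le_one, by
    calc mass s μ {x | h x > 1} ≤ ∑ x ∈ s, μ x := mass_le_sum' s μ hμ0 _
    _ = 1 := hμ1⟩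
  have hne : S.Nonempty := ⟨1, h1⟩
  have hbdd : BddBelow S := ⟨0, fun ε hε => hε.1⟩
  have hl0 : 0 ≤ sInf S := le_csInf hne fun ε hε => hε.1
  refine ⟨hl0, ?_⟩
  set l := sInf S with hl
  -- level set at l within s
  set T := s.filter (fun x => h x > l) with hT
  by_cases hTe : T = ∅
  · have : mass s μ {x | h x > l} = 0 := by
      refine Finset.sum_eq_zero fun x hx => ?_
      have hxT : x ∉ T := by simp [hTe]
      have hnx : x ∉ {x | h x > l} := by
        intro hc; exact hxT (Finset.mem_filter.mpr ⟨hx, hc⟩)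
      exact Set.indicator_of_notMem hnx μ
    rw [this]; exact hl0
  · have hTne : T.Nonempty := Finset.nonempty_iff_ne_empty.mpr hTe
    obtain ⟨x0, hx0⟩ := hTne
    set m := T.inf' ⟨x0, hx0⟩ h with hm
    have hml : l < m := by
      rw [hm]; refine (Finset.lt_inf'_iff _).2 ?_
      intro y hy
      exact (Finset.mem_filter.mp hy).2
    -- show mass ≤ l + δ for all δ > 0
    refine le_of_forall_pos_le_add fun δ hδ => ?_
    have hlt : l < min m (l + δ) := lt_min hml (by linarith)
    obtain ⟨ε, hεS, hεlt⟩ := exists_lt_of_csInf_lt hne hlt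
    have hεl : l ≤ ε := csInf_le hbdd hεS
    have heq : mass s μ {x | h x > l} = mass s μ {x | h x > ε} := by
      refine mass_congr' s μ fun x hx => ?_
      simp only [Set.mem_setOf_eq]
      constructor
      · intro hxl
        have hxT : x ∈ T := Finset.mem_filter.mpr ⟨hx, hxl⟩
        have : m ≤ h x := Finset.inf'_le h hxT
        exact lt_of_lt_of_le (lt_of_lt_of_le hεlt (min_le_left _ _)) this
      · intro hxε
        exact lt_of_le_of_lt hεl hxε
    calc mass s μ {x | h x > l} = mass s μ {x | h x > ε} := heq
      _ ≤ ε := hεS.2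
      _ ≤ l + δ := le_of_lt (lt_of_lt_of_le hεlt (min_le_right _ _))

theorem lp_modality_subadditive {X : Type*} (μ : X → ℝ) (s : Finset X)
    (hμ0 : ∀ x, 0 ≤ μ x) (hμs : ∀ x ∉ s, μ x = 0) (hμ1 : ∑ x ∈ s, μ x = 1)
    (f g : X → ℝ) (hf : ∀ x, f x ∈ Set.Icc (0:ℝ) 1) (hg : ∀ x, g x ∈ Set.Icc (0:ℝ) 1) :
    sInf {ε : ℝ | 0 ≤ ε ∧ mass s μ {x | min 1 (f x + g x) > ε} ≤ ε} ≤
    min 1 (sInf {ε : ℝ | 0 ≤ ε ∧ mass s μ {x | f x > ε} ≤ ε} +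
           sInf {ε : ℝ | 0 ≤ ε ∧ mass s μ {x | g x > ε} ≤ ε}) := by
  have hfmem := sInf_mem_level μ s hμ0 hμ1 f
  have hgmem := sInf_mem_level μ s hμ0 hμ1 g
  set lf := sInf {ε : ℝ | 0 ≤ ε ∧ mass s μ {x | f x > ε} ≤ ε} with hlf
  set lg := sInf {ε : ℝ | 0 ≤ ε ∧ mass s μ {x | g x > ε} ≤ ε} with hlg
  set t := min 1 (lf + lg) with ht
  have hbdd : BddBelow {ε : ℝ | 0 ≤ ε ∧ mass s μ {x | min 1 (f x + g x) > ε} ≤ ε} :=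
    ⟨0, fun ε hε => hε.1⟩
  refine csInf_le hbdd ?_
  have ht0 : 0 ≤ t := le_min zero_le_one (add_nonneg hfmem.1 hgmem.1)
  refine ⟨ht0, ?_⟩
  have hsub : {x | min 1 (f x + g x) > t} ⊆ {x | f x > lf} ∪ {x | g x > lg} := by
    intro x hx
    simp only [Set.mem_setOf_eq] at hx
    by_contra hc
    simp only [Set.mem_union, Set.mem_setOf_eq, not_or, not_lt] at hc
    have h1 : min 1 (f x + g x) ≤ 1 := min_le_left _ _
    have h2 : min 1 (f x + g x) ≤ lf + lg := le_trans (min_le_right _ _) (add_le_add hc.1 hc.2)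
    have : min 1 (f x + g x) ≤ t := le_min h1 h2
    linarith
  have hmass1 : mass s μ {x | min 1 (f x + g x) > t} ≤ 1 := by
    calc mass s μ _ ≤ ∑ x ∈ s, μ x := mass_le_sum' s μ hμ0 _
    _ = 1 := hμ1
  have hmass2 : mass s μ {x | min 1 (f x + g x) > t} ≤ lf + lg := by
    calc mass s μ {x | min 1 (f x + g x) > t}
        ≤ mass s μ ({x | f x > lf} ∪ {x | g x > lg}) := mass_mono' s μ hμ0 hsub
      _ ≤ mass s μ {x | f x > lf} + mass s μ {x | g x > lg} := mass_union_le' s μ hμ0 _ _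
      _ ≤ lf + lg := add_le_add hfmem.2 hgmem.2
  exact le_min hmass1 hmass2
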